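/- arXiv:2603.28839 — 4 statements merged into one kernel-verified Lean document; each statement's English description precedes it below -/
import Mathlib

section
/- Let A be an associative ring with unit, let X, Z, V be elements of A, and let ξ, η be central elements of A satisfying ZX − XZ = Z² + X, XV − VX = VZ + ZV + ξ, and VZ − ZV = V + 2X + η. Then the Hahn algebra relations hold: [[V,Z],V] = 2(VZ + ZV) + 2ξ and [Z,[V,Z]] = 2Z² − V − η, where [A,B] denotes AB − BA. -/
/-- In an associative unital ring `A`, if `X, Z, V` satisfy
`ZX − XZ = Z² + X`, `XV − VX = VZ + ZV + ξ`, `VZ − ZV = V + 2X + η` with `ξ, η` central,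
then the Hahn algebra relations hold:
`[[V,Z],V] = 2(VZ + ZV) + 2ξ` and `[Z,[V,Z]] = 2Z² − V − η`. -/
theorem hahn_relations {A : Type*} [Ring A] (X Z V ξ η : A)
    (hξ : ∀ a : A, ξ * a = a * ξ)
    (hη : ∀ a : A, η * a = a * η)
    (rel1 : Z * X - X * Z = Z ^ 2 + X)
    (rel2 : X * V - V * X = V * Z + Z * V + ξ)
    (rel3 : V * Z - Z * V = V + 2 * X + η) :
    (V * Z - Z * V) * V - V * (V * Z - Z * V) = 2 * (V * Z + Z * V) + 2 * ξ ∧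
    Z * (V * Z - Z * V) - (V * Z - Z * V) * Z = 2 * Z ^ 2 - V - η := by
  constructor
  · have key : (V + 2 * X + η) * V - V * (V + 2 * X + η)
        = 2 * (X * V - V * X) + (η * V - V * η) := by noncomm_ring
    rw [rel3, key, rel2, hη V]
    noncomm_ring
  · have key : Z * (V + 2 * X + η) - (V + 2 * X + η) * Z
        = 2 * (Z * X - X * Z) - (V * Z - Z * V) + (η * Z - Z * η) * (-1) := by noncomm_ring
    rw [rel3, key, rel1, rel3, hη Z]
    noncomm_ring
end

section
/- Assume N ≥ 2 and that n(N+1−n)(n−1−2α−β−2ζ+N) ≠ 0 for every n with 1 ≤ n ≤ N. Let h₀, h₁, h₂, h₃, h₄ be real numbers and let H = h₀I + h₁Z + h₂V + h₃ZV + h₄VZ. Then the entry H_{n−1,n} vanishes for every n with 1 ≤ n ≤ N if and only if h₂ = −h₄ and h₃ = −h₄; in that case H = h₀I + h₁Z − h₄V + h₄(VZ − ZV) and H_{m,n} = 0 whenever m ≠ n and m ≠ n+1, i.e. H acts bidiagonally in the same fashion as Z. -/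
/-- The matrix `Z` with entries `Z_{m,n} = (n−α)δ_{m,n} + δ_{m,n+1}`. -/
noncomputable def Zmat (N : ℕ) (α : ℝ) : Matrix (Fin (N + 1)) (Fin (N + 1)) ℝ :=
  fun m n => (if m = n then (n : ℝ) - α else 0) + (if (m : ℕ) = (n : ℕ) + 1 then 1 else 0)

/-- The matrix `V` with entries
`V_{m,n} = (n−β−ζ−1)(β+ζ−n)δ_{m,n} + n(N+1−n)(n−1−2α−β−2ζ+N)δ_{m,n−1}`. -/
noncomputable def Vmat (N : ℕ) (α β ζ : ℝ) : Matrix (Fin (N + 1)) (Fin (N + 1)) ℝ :=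
  fun m n => (if m = n then ((n : ℝ) - β - ζ - 1) * (β + ζ - (n : ℝ)) else 0)
    + (if (m : ℕ) + 1 = (n : ℕ) then
        (n : ℝ) * ((N : ℝ) + 1 - (n : ℝ)) * ((n : ℝ) - 1 - 2 * α - β - 2 * ζ + (N : ℝ))
      else 0)

/-- coefficient on superdiagonal of V at column k+1 -/
noncomputable def Csup (N : ℕ) (α β ζ : ℝ) (k : ℕ) : ℝ :=
  ((k : ℝ) + 1) * ((N : ℝ) - (k : ℝ)) * ((k : ℝ) - 2 * α - β - 2 * ζ + (N : ℝ))

lemma far_ZV {N : ℕ} {α β ζ : ℝ} (m n : Fin (N+1)) (h1 : (m:ℕ) ≠ n)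
    (h2 : (m:ℕ) ≠ (n:ℕ)+1) (h3 : (m:ℕ)+1 ≠ (n:ℕ)) :
    (Zmat N α * Vmat N α β ζ) m n = 0 := by
  rw [Matrix.mul_apply]
  apply Finset.sum_eq_zero
  intro k _
  simp only [Zmat, Vmat, Fin.ext_iff]
  split_ifs <;> (try (exfalso; omega)) <;> ring

lemma far_VZ {N : ℕ} {α β ζ : ℝ} (m n : Fin (N+1)) (h1 : (m:ℕ) ≠ n)
    (h2 : (m:ℕ) ≠ (n:ℕ)+1) (h3 : (m:ℕ)+1 ≠ (n:ℕ)) :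
    (Vmat N α β ζ * Zmat N α) m n = 0 := by
  rw [Matrix.mul_apply]
  apply Finset.sum_eq_zero
  intro k _
  simp only [Zmat, Vmat, Fin.ext_iff]
  split_ifs <;> (try (exfalso; omega)) <;> ring

lemma super_ZV {N : ℕ} {α β ζ : ℝ} (k : ℕ) (hk : k < N) :
    (Zmat N α * Vmat N α β ζ) ⟨k, Nat.lt_succ_of_lt hk⟩ ⟨k + 1, Nat.succ_lt_succ hk⟩
      = ((k : ℝ) - α) * Csup N α β ζ k := by
  rw [Matrix.mul_apply, Finset.sum_eq_single (⟨k, Nat.lt_succ_of_lt hk⟩ : Fin (N+1))]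
  · simp only [Zmat, Vmat, Csup, Fin.ext_iff, Fin.val_mk]
    split_ifs <;> (try (exfalso; omega)) <;> (push_cast; ring)
  · intro b _ hb
    rw [Ne, Fin.ext_iff] at hb; have hb2 : ¬ (b:ℕ) = k := hb
    simp only [Zmat, Vmat, Fin.ext_iff, Fin.val_mk]
    split_ifs <;> (try (exfalso; omega)) <;> ring
  · intro h; exact absurd (Finset.mem_univ _) h

lemma super_VZ {N : ℕ} {α β ζ : ℝ} (k : ℕ) (hk : k < N) :
    (Vmat N α β ζ * Zmat N α) ⟨k, Nat.lt_succ_of_lt hk⟩ ⟨k + 1, Nat.succ_lt_succ hk⟩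
      = Csup N α β ζ k * ((k : ℝ) + 1 - α) := by
  rw [Matrix.mul_apply, Finset.sum_eq_single (⟨k + 1, Nat.succ_lt_succ hk⟩ : Fin (N+1))]
  · simp only [Zmat, Vmat, Csup, Fin.ext_iff, Fin.val_mk]
    split_ifs <;> (try (exfalso; omega)) <;> (push_cast; ring)
  · intro b _ hb
    rw [Ne, Fin.ext_iff] at hb; have hb2 : ¬ (b:ℕ) = k + 1 := hb
    simp only [Zmat, Vmat, Fin.ext_iff, Fin.val_mk]
    split_ifs <;> (try (exfalso; omega)) <;> ring
  · intro h; exact absurd (Finset.mem_univ _) h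

lemma Csup_ne {N : ℕ} {α β ζ : ℝ}
    (hV : ∀ n : ℕ, 1 ≤ n → n ≤ N →
      (n : ℝ) * ((N : ℝ) + 1 - (n : ℝ)) * ((n : ℝ) - 1 - 2 * α - β - 2 * ζ + (N : ℝ)) ≠ 0)
    (k : ℕ) (hk : k < N) : Csup N α β ζ k ≠ 0 := by
  intro hc
  apply hV (k+1) (by omega) (by omega)
  push_cast
  unfold Csup at hc
  linear_combination hc

/-- For `N ≥ 2` and nonvanishing subdiagonal coefficients of `V`, the
algebraic Heun operator `H = h₀I + h₁Z + h₂V + h₃ZV + h₄VZ` has vanishing entries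
`H_{n−1,n}` for all `1 ≤ n ≤ N` iff `h₂ = −h₄` and `h₃ = −h₄`; in that case
`H = h₀I + h₁Z − h₄V + h₄(VZ − ZV)` and `H` is bidiagonal in the same fashion as `Z`. -/
theorem heun_bidiagonal (N : ℕ) (hN : 2 ≤ N) (α β ζ : ℝ)
    (hV : ∀ n : ℕ, 1 ≤ n → n ≤ N →
      (n : ℝ) * ((N : ℝ) + 1 - (n : ℝ)) * ((n : ℝ) - 1 - 2 * α - β - 2 * ζ + (N : ℝ)) ≠ 0)
    (h₀ h₁ h₂ h₃ h₄ : ℝ)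
    (H : Matrix (Fin (N + 1)) (Fin (N + 1)) ℝ)
    (hH : H = h₀ • (1 : Matrix (Fin (N + 1)) (Fin (N + 1)) ℝ)
      + h₁ • Zmat N α + h₂ • Vmat N α β ζ
      + h₃ • (Zmat N α * Vmat N α β ζ) + h₄ • (Vmat N α β ζ * Zmat N α)) :
    ((∀ k : ℕ, ∀ hk : k < N,
        H ⟨k, Nat.lt_succ_of_lt hk⟩ ⟨k + 1, Nat.succ_lt_succ hk⟩ = 0)
      ↔ (h₂ = -h₄ ∧ h₃ = -h₄)) ∧
    ((h₂ = -h₄ ∧ h₃ = -h₄) →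
      H = h₀ • (1 : Matrix (Fin (N + 1)) (Fin (N + 1)) ℝ) + h₁ • Zmat N α
          - h₄ • Vmat N α β ζ
          + h₄ • (Vmat N α β ζ * Zmat N α - Zmat N α * Vmat N α β ζ) ∧
      ∀ m n : Fin (N + 1), (m : ℕ) ≠ (n : ℕ) → (m : ℕ) ≠ (n : ℕ) + 1 → H m n = 0) := by
  -- formula for the superdiagonal entries of H
  have Hsuper : ∀ k : ℕ, ∀ hk : k < N,
      H ⟨k, Nat.lt_succ_of_lt hk⟩ ⟨k + 1, Nat.succ_lt_succ hk⟩
        = (h₂ + h₃ * ((k : ℝ) - α) + h₄ * ((k : ℝ) + 1 - α)) * Csup N α β ζ k := by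
    intro k hk
    rw [hH]
    simp only [Matrix.add_apply, Matrix.smul_apply, smul_eq_mul]
    rw [super_ZV k hk, super_VZ k hk]
    have hZ : Zmat N α ⟨k, Nat.lt_succ_of_lt hk⟩ ⟨k + 1, Nat.succ_lt_succ hk⟩ = 0 := by
      simp only [Zmat, Fin.ext_iff, Fin.val_mk]
      split_ifs <;> (try (exfalso; omega)) <;> ring
    have hVe : Vmat N α β ζ ⟨k, Nat.lt_succ_of_lt hk⟩ ⟨k + 1, Nat.succ_lt_succ hk⟩
        = Csup N α β ζ k := by
      simp only [Vmat, Csup, Fin.ext_iff, Fin.val_mk]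
      split_ifs <;> (try (exfalso; omega)) <;> (push_cast; ring)
    have hone : (1 : Matrix (Fin (N + 1)) (Fin (N + 1)) ℝ)
        ⟨k, Nat.lt_succ_of_lt hk⟩ ⟨k + 1, Nat.succ_lt_succ hk⟩ = 0 := by
      rw [Matrix.one_apply_ne]
      intro h; rw [Fin.ext_iff] at h; simp only [Fin.val_mk] at h; omega
    rw [hZ, hVe, hone]
    ring
  have main_iff : (∀ k : ℕ, ∀ hk : k < N,
      H ⟨k, Nat.lt_succ_of_lt hk⟩ ⟨k + 1, Nat.succ_lt_succ hk⟩ = 0) ↔ (h₂ = -h₄ ∧ h₃ = -h₄) := by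
    constructor
    · intro hvan
      have e0 := hvan 0 (by omega)
      have e1 := hvan 1 (by omega)
      rw [Hsuper 0 (by omega)] at e0
      rw [Hsuper 1 (by omega)] at e1
      have f0 := (mul_eq_zero.mp e0).resolve_right (Csup_ne hV 0 (by omega))
      have f1 := (mul_eq_zero.mp e1).resolve_right (Csup_ne hV 1 (by omega))
      push_cast at f0 f1
      have h3e : h₃ = -h₄ := by linear_combination f1 - f0
      refine ⟨by linear_combination f0 + α * h3e, h3e⟩
    · rintro ⟨he2, he3⟩ k hk
      rw [Hsuper k hk, he2, he3]
      ring
  refine ⟨main_iff, ?_⟩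
  rintro ⟨he2, he3⟩
  constructor
  · rw [hH, he2, he3]
    ext i j
    simp only [Matrix.add_apply, Matrix.sub_apply, Matrix.smul_apply, smul_eq_mul,
      Matrix.neg_apply]
    ring
  · intro m n hmn hmn1
    by_cases hsup : (m : ℕ) + 1 = (n : ℕ)
    · have hm : (m : ℕ) < N := by omega
      have hmm : m = ⟨(m : ℕ), Nat.lt_succ_of_lt hm⟩ := by
        apply Fin.ext; simp
      have hnn : n = ⟨(m : ℕ) + 1, Nat.succ_lt_succ hm⟩ := by
        apply Fin.ext; simp [← hsup]
      rw [hmm, hnn]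
      exact main_iff.mpr ⟨he2, he3⟩ (m : ℕ) hm
    · rw [hH]
      simp only [Matrix.add_apply, Matrix.smul_apply, smul_eq_mul]
      rw [far_ZV m n hmn hmn1 hsup, far_VZ m n hmn hmn1 hsup,
        Matrix.one_apply_ne (fun h => hmn (by rw [h]))]
      have hZ : Zmat N α m n = 0 := by
        simp only [Zmat, Fin.ext_iff]
        split_ifs <;> (try (exfalso; omega)) <;> ring
      have hVe : Vmat N α β ζ m n = 0 := by
        simp only [Vmat, Fin.ext_iff]
        split_ifs <;> (try (exfalso; omega)) <;> ring
      rw [hZ, hVe]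
      ring
end

section
/- Fix an integer n with 0 ≤ n ≤ N and assume α − β is not an integer. Let d ∈ ℝ^{N+1} be the vector with components d_ℓ = (n−N)_{N−ℓ} (α−N)_{N−ℓ} / (n−N−α+β+1)_{N−ℓ} for 0 ≤ ℓ ≤ N. Then d_N = 1 (in particular d ≠ 0) and d solves the generalized eigenvalue problem X d = (α − n) Z d. -/
/-- The Pochhammer symbol `(a)_k = a(a+1)⋯(a+k−1)`. -/
noncomputable def poch (a : ℝ) (k : ℕ) : ℝ := ∏ i ∈ Finset.range k, (a + i)

/-- The matrix `X` with entries `X_{m,n} = −(n−α)²δ_{m,n} − (n−β)δ_{m,n+1}`. -/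
noncomputable def Xmat (N : ℕ) (α β : ℝ) : Matrix (Fin (N + 1)) (Fin (N + 1)) ℝ :=
  fun m n => (if m = n then -((n : ℝ) - α) ^ 2 else 0)
    + (if (m : ℕ) = (n : ℕ) + 1 then -((n : ℝ) - β) else 0)

/-- For `0 ≤ n ≤ N` and `α − β` not an integer, the vector with components
`d_ℓ = (n−N)_{N−ℓ} (α−N)_{N−ℓ} / (n−N−α+β+1)_{N−ℓ}` satisfies `d_N = 1` (so `d ≠ 0`)
and solves the generalized eigenvalue problem `X d = (α − n) Z d`. -/
theorem gevp_solution_d (N : ℕ) (hN : 1 ≤ N) (α β ζ : ℝ)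
    (n : ℕ) (hn : n ≤ N)
    (hαβ : ∀ z : ℤ, α - β ≠ (z : ℝ))
    (d : Fin (N + 1) → ℝ)
    (hd : ∀ ℓ : Fin (N + 1), d ℓ =
      poch ((n : ℝ) - (N : ℝ)) (N - ℓ) * poch (α - (N : ℝ)) (N - ℓ)
        / poch ((n : ℝ) - (N : ℝ) - α + β + 1) (N - ℓ)) :
    d ⟨N, Nat.lt_succ_self N⟩ = 1 ∧ d ≠ 0 ∧
    (Xmat N α β).mulVec d = (α - (n : ℝ)) • (Zmat N α).mulVec d := by
  have hdN : d ⟨N, Nat.lt_succ_self N⟩ = 1 := by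
    rw [hd]; simp [poch]
  -- denominators are nonzero
  have hDfac : ∀ k : ℤ, (n : ℝ) - N - α + β + 1 + k ≠ 0 := by
    intro k h0
    exact hαβ ((n : ℤ) - N + 1 + k) (by push_cast; linarith)
  have hDne : ∀ k : ℕ, poch ((n : ℝ) - N - α + β + 1) k ≠ 0 := by
    intro k
    refine Finset.prod_ne_zero_iff.mpr ?_
    intro i _
    exact hDfac i
  -- the key recurrence
  have hrec : ∀ k : ℕ, ∀ hk : k < N,
      d ⟨k, by omega⟩ * ((n : ℝ) - (k + 1) - α + β + 1) =
      d ⟨k + 1, by omega⟩ * (((n : ℝ) - (k + 1)) * (α - (k + 1))) := by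
    intro k hk
    rw [hd, hd]
    simp only
    have h1 : N - k = (N - (k + 1)) + 1 := by omega
    have hj : ((N - (k + 1) : ℕ) : ℝ) = (N : ℝ) - ((k : ℝ) + 1) := by
      push_cast [Nat.cast_sub (show k + 1 ≤ N by omega)]; ring
    have hpoch : ∀ a : ℝ, ∀ j : ℕ, poch a (j + 1) = poch a j * (a + j) :=
      fun a j => Finset.prod_range_succ _ _
    rw [h1, hpoch, hpoch, hpoch, hj]
    have hD1 := hDne (N - (k + 1))
    have hD2 : (n : ℝ) - N - α + β + 1 + ((N : ℝ) - ((k : ℝ) + 1)) ≠ 0 := by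
      intro h0
      exact hαβ ((n : ℤ) - k) (by push_cast; linarith)
    field_simp
    ring
  refine ⟨hdN, ?_, ?_⟩
  · intro h
    rw [h] at hdN; simp at hdN
  · funext m
    obtain ⟨mv, hmv⟩ := m
    simp only [Matrix.mulVec, dotProduct, Xmat, Zmat, Pi.smul_apply, smul_eq_mul,
      add_mul, ite_mul, zero_mul, one_mul, Finset.sum_add_distrib, Finset.sum_ite_eq,
      Finset.mem_univ, if_true]
    cases mv with
    | zero =>
      have hz : ∀ (g : Fin (N + 1) → ℝ),
          (∑ j : Fin (N + 1), if (0 : ℕ) = (j : ℕ) + 1 then g j else 0) = 0 := by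
        intro g; exact Finset.sum_eq_zero (fun j _ => by simp)
      rw [hz, hz]
      simp only [Fin.val_mk, Nat.cast_zero, add_zero]
      rcases Nat.eq_zero_or_pos n with hn0 | hn1
      · subst hn0; push_cast; ring
      · have hd0 : d ⟨0, by omega⟩ = 0 := by
          rw [hd]
          have : poch ((n : ℝ) - N) (N - (0 : ℕ)) = 0 := by
            unfold poch
            refine Finset.prod_eq_zero (Finset.mem_range.mpr (show N - n < N - 0 by omega)) ?_
            push_cast [Nat.cast_sub hn]; ring
          simp only [Fin.val_mk] at this ⊢
          rw [this, zero_mul, zero_div]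
        rw [hd0]; ring
    | succ k =>
      have hk : k < N := by omega
      have hsingle : ∀ (g : Fin (N + 1) → ℝ),
          (∑ j : Fin (N + 1), if (k + 1 : ℕ) = (j : ℕ) + 1 then g j else 0) =
          g ⟨k, by omega⟩ := by
        intro g
        rw [Finset.sum_eq_single (⟨k, by omega⟩ : Fin (N + 1))]
        · simp
        · intro j _ hj
          rw [if_neg]
          intro hc
          exact hj (Fin.ext (by simp only [Fin.val_mk]; omega))
        · intro h; exact absurd (Finset.mem_univ _) h
      rw [hsingle, hsingle]
      simp only [Fin.val_mk]
      have hD : (n : ℝ) - ((k : ℝ) + 1) - α + β + 1 ≠ 0 := by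
        intro h0
        exact hαβ ((n : ℤ) - k) (by push_cast; linarith)
      have hk' := hrec k hk
      push_cast at hk' ⊢
      have hy : d ⟨k, by omega⟩ =
          d ⟨k + 1, by omega⟩ * (((n : ℝ) - ((k : ℝ) + 1)) * (α - ((k : ℝ) + 1))) /
            ((n : ℝ) - ((k : ℝ) + 1) - α + β + 1) := by
        rw [eq_div_iff hD]; linarith [hk']
      rw [hy]
      field_simp
      ring
end

section
/- Fix an integer n with 0 ≤ n ≤ N and assume α − β is not an integer. Let d* ∈ ℝ^{N+1} be the vector with components d*_ℓ = (−1)^ℓ (−n)_ℓ (−α)_ℓ / (−n+α−β)_ℓ for 0 ≤ ℓ ≤ N. Then d*_0 = 1 (in particular d* ≠ 0) and d* solves the transposed generalized eigenvalue problem Xᵀ d* = (α − n) Zᵀ d*, where Xᵀ and Zᵀ are the transposes of X and Z. -/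
lemma poch_succ (a : ℝ) (k : ℕ) : poch a (k+1) = poch a k * (a + k) := by
  simp [poch, Finset.prod_range_succ]

lemma poch_ne_zero (a : ℝ) (k : ℕ) (h : ∀ i < k, a + i ≠ 0) : poch a k ≠ 0 :=
  Finset.prod_ne_zero_iff.2 fun i hi => h i (Finset.mem_range.1 hi)

lemma poch_eq_zero (a : ℝ) (k i : ℕ) (hi : i < k) (h : a + i = 0) : poch a k = 0 :=
  Finset.prod_eq_zero (Finset.mem_range.2 hi) h

lemma sum_shift {N : ℕ} (B : ℝ) (d : Fin (N+1) → ℝ) (m : Fin (N+1)) :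
    ∑ k : Fin (N+1), (if (k:ℕ) = (m:ℕ)+1 then B else 0) * d k
      = if h : (m:ℕ) + 1 < N + 1 then B * d ⟨(m:ℕ)+1, h⟩ else 0 := by
  split
  · next h =>
    rw [Finset.sum_eq_single (⟨(m:ℕ)+1, h⟩ : Fin (N+1))]
    · simp
    · intro b _ hb
      have : (b:ℕ) ≠ (m:ℕ)+1 := fun hc => hb (Fin.ext hc)
      simp [this]
    · simp
  · next h =>
    apply Finset.sum_eq_zero; intro k _
    have : (k:ℕ) ≠ (m:ℕ)+1 := by have := k.2; omega
    simp [this]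

lemma sum_diag {N : ℕ} (B : ℝ) (d : Fin (N+1) → ℝ) (m : Fin (N+1)) :
    ∑ k : Fin (N+1), (if k = m then B else 0) * d k = B * d m := by
  simp [ite_mul, Finset.sum_ite_eq']

/-- For `0 ≤ n ≤ N` and `α − β` not an integer, the vector with components
`d*_ℓ = (−1)^ℓ (−n)_ℓ (−α)_ℓ / (−n+α−β)_ℓ` satisfies `d*_0 = 1` (so `d* ≠ 0`)
and solves the transposed generalized eigenvalue problem `Xᵀ d* = (α − n) Zᵀ d*`. -/
theorem gevp_solution_dstar (N : ℕ) (hN : 1 ≤ N) (α β ζ : ℝ)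
    (n : ℕ) (hn : n ≤ N)
    (hαβ : ∀ z : ℤ, α - β ≠ (z : ℝ))
    (dstar : Fin (N + 1) → ℝ)
    (hd : ∀ ℓ : Fin (N + 1), dstar ℓ =
      (-1 : ℝ) ^ (ℓ : ℕ) * poch (-(n : ℝ)) ℓ * poch (-α) ℓ
        / poch (-(n : ℝ) + α - β) ℓ) :
    dstar ⟨0, Nat.succ_pos N⟩ = 1 ∧ dstar ≠ 0 ∧
    (Xmat N α β).transpose.mulVec dstar
      = (α - (n : ℝ)) • (Zmat N α).transpose.mulVec dstar := by
  have hden : ∀ i : ℕ, -(n:ℝ) + α - β + (i:ℝ) ≠ 0 := by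
    intro i hc
    exact hαβ ((n:ℤ) - (i:ℤ)) (by push_cast; linarith)
  have hd0 : dstar ⟨0, Nat.succ_pos N⟩ = 1 := by
    rw [hd]; simp [poch]
  have hrec : ∀ (ℓ : ℕ) (h : ℓ < N),
      (α - β + (ℓ:ℝ) - (n:ℝ)) * dstar ⟨ℓ+1, by omega⟩
        = -(((ℓ:ℝ) - n) * ((ℓ:ℝ) - α)) * dstar ⟨ℓ, by omega⟩ := by
    intro ℓ h
    rw [hd ⟨ℓ+1, by omega⟩, hd ⟨ℓ, by omega⟩]
    simp only
    rw [poch_succ, poch_succ, poch_succ, pow_succ]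
    have h1 : poch (-(n:ℝ) + α - β) ℓ ≠ 0 :=
      poch_ne_zero _ _ fun i _ => hden i
    have h2 : -(n:ℝ) + α - β + (ℓ:ℝ) ≠ 0 := hden ℓ
    field_simp
    ring
  have htop : ((N:ℝ) - (n:ℝ)) * dstar ⟨N, by omega⟩ = 0 := by
    rcases eq_or_lt_of_le hn with h | h
    · simp [h]
    · have : poch (-(n:ℝ)) N = 0 := poch_eq_zero _ _ n h (by simp)
      rw [hd]; simp [this]
  refine ⟨hd0, fun hc => by rw [hc] at hd0; simpa using hd0, ?_⟩
  funext m
  simp only [Matrix.mulVec, dotProduct, Matrix.transpose_apply, Pi.smul_apply,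
    smul_eq_mul, Xmat, Zmat, add_mul, Finset.sum_add_distrib, sum_shift, sum_diag]
  rcases Nat.lt_or_ge (m:ℕ) N with hm | hm
  · rw [dif_pos (by omega), dif_pos (by omega)]
    have hR := hrec (m:ℕ) hm
    have hmm : (⟨(m:ℕ), by omega⟩ : Fin (N+1)) = m := Fin.ext rfl
    rw [hmm] at hR
    linear_combination (-1 : ℝ) * hR
  · have hmN : (m:ℕ) = N := by have := m.2; omega
    rw [dif_neg (by omega), dif_neg (by omega)]
    have hmm : (⟨N, by omega⟩ : Fin (N+1)) = m := Fin.ext hmN.symm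
    rw [hmm] at htop
    rw [hmN]
    linear_combination (-((N:ℝ) - α)) * htop
end
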